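/- arXiv:2202.02474 — 3 statements merged into one kernel-verified Lean document; each statement's English description precedes it below -/
import Mathlib

section
/- Let H be a separable Hilbert space over ℝ, let C be a compact, positive, self-adjoint bounded linear operator on H, let β ∈ (0, 1/2], let g ∈ H, and set r₀ = C^β g. Then for every η > 0, ‖(C + ηI)⁻¹ C r₀ − r₀‖ ≤ η^β · ‖g‖. -/
open scoped RealInnerProductSpace

/-!
With `x = (C + ηI)⁻¹ r₀`, the residual `(C + ηI)⁻¹ C r₀ - r₀` equals `-η x`. In the eigenbasis `x`
has coefficients `ν_k^β g_k / (ν_k + η)`, and weighted AM-GM gives `η ν^β ≤ η^β (ν + η)`, so every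
coefficient of `η x` is dominated by the corresponding coefficient of `η^β g`; Parseval concludes.
-/

lemma Real.mul_rpow_div_add_le_rpow {ν η β : ℝ} (hν : 0 ≤ ν) (hη : 0 < η) (hβ0 : 0 ≤ β)
    (hβ1 : β ≤ 1) : η * ν ^ β / (ν + η) ≤ η ^ β := by
  have amgm : η ^ (1 - β) * ν ^ β ≤ (1 - β) * η + β * ν :=
    Real.geom_mean_le_arith_mean2_weighted (by linarith) hβ0 hη.le hν (by ring)
  have split : η = η ^ β * η ^ (1 - β) := by
    rw [← Real.rpow_add hη, add_sub_cancel, Real.rpow_one]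
  rw [div_le_iff₀ (by positivity)]
  calc η * ν ^ β = η ^ β * (η ^ (1 - β) * ν ^ β) := by rw [← mul_assoc, ← split]
    _ ≤ η ^ β * (ν + η) := by gcongr; nlinarith

lemma Ring.inverse_add_smul_one_mul {R A : Type*} [CommRing R] [Ring A] [Algebra R A] {a : A}
    {η : R} (h : IsUnit (a + η • 1)) :
    Ring.inverse (a + η • 1) * a = 1 - η • Ring.inverse (a + η • 1) := by
  calc Ring.inverse (a + η • 1) * a = Ring.inverse (a + η • 1) * (a + η • 1 - η • 1) := by
        rw [add_sub_cancel_right]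
    _ = 1 - η • Ring.inverse (a + η • 1) := by
        rw [mul_sub, Ring.inverse_mul_cancel _ h, mul_smul_comm, mul_one]

lemma ContinuousLinearMap.IsPositive.isUnit_add_smul_one {E : Type*} [NormedAddCommGroup E]
    [InnerProductSpace ℝ E] [CompleteSpace E] {T : E →L[ℝ] E} (hT : T.IsPositive) {η : ℝ}
    (hη : 0 < η) : IsUnit (T + η • 1) := by
  refine isUnit_of_forall_le_norm_inner_map _ (c := (⟨η, hη.le⟩ : NNReal)) hη fun x ↦ ?_
  have hTx : 0 ≤ ⟪T x, x⟫ := by simpa using hT.inner_nonneg_left x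
  have hinner : ⟪(T + η • 1) x, x⟫ = ⟪T x, x⟫ + η * ‖x‖ ^ 2 := by
    simp [inner_add_left, real_inner_smul_left]
  rw [hinner, Real.norm_of_nonneg (by positivity)]
  change ‖x‖ ^ 2 * η ≤ _
  linarith

namespace HilbertBasis

variable {ι 𝕜 E : Type*} [RCLike 𝕜] [NormedAddCommGroup E] [InnerProductSpace 𝕜 E]

lemma repr_apply_of_apply_eq_smul (b : HilbertBasis ι 𝕜 E) {T : E →L[𝕜] E} {μ : ι → 𝕜}
    (hT : ∀ i, T (b i) = μ i • b i) (x : E) (i : ι) : b.repr (T x) i = μ i * b.repr x i := by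
  simp only [b.repr_apply_apply]
  suffices (innerSL 𝕜 (b i)).comp T = μ i • innerSL 𝕜 (b i) from congr($this x)
  refine ContinuousLinearMap.ext_on
    (Submodule.dense_iff_topologicalClosure_eq_top.mpr b.dense_span) ?_
  rintro _ ⟨j, rfl⟩
  rcases eq_or_ne i j with rfl | hij
  · simp [hT]
  · simp [hT, b.orthonormal.inner_eq_zero hij]

lemma norm_le_norm_of_forall_norm_repr_le (b : HilbertBasis ι 𝕜 E) {x y : E}
    (h : ∀ i, ‖b.repr x i‖ ≤ ‖b.repr y i‖) : ‖x‖ ≤ ‖y‖ := by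
  simpa using lp.norm_mono two_ne_zero h

end HilbertBasis

theorem stmt0_general
    {H : Type*} [NormedAddCommGroup H] [InnerProductSpace ℝ H] [CompleteSpace H]
    (C : H →L[ℝ] H) (hC_pos : C.IsPositive)
    {ι : Type*} (e : HilbertBasis ι ℝ H) (ν : ι → ℝ) (hν : ∀ k, 0 ≤ ν k)
    (heig : ∀ k, C (e k) = ν k • e k)
    (β : ℝ) (hβ : β ∈ Set.Ioc (0 : ℝ) (1 / 2))
    (Cβ : H →L[ℝ] H) (hCβ : ∀ k, Cβ (e k) = (ν k ^ β) • e k)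
    (g r₀ : H) (hr₀ : r₀ = Cβ g)
    (η : ℝ) (hη : 0 < η) :
    ‖Ring.inverse (C + η • (1 : H →L[ℝ] H)) (C r₀) - r₀‖ ≤ η ^ β * ‖g‖ := by
  set A := C + η • (1 : H →L[ℝ] H)
  have hA : IsUnit A := hC_pos.isUnit_add_smul_one hη
  set x := Ring.inverse A r₀
  have hAx : A x = r₀ := congr($(Ring.mul_inverse_cancel A hA) r₀)
  have hresidual : Ring.inverse A (C r₀) - r₀ = -(η • x) := by
    rw [← mul_apply_eq_comp, Ring.inverse_add_smul_one_mul hA]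
    simp [x, A]
  have hAeig (k : ι) : A (e k) = (ν k + η) • e k := by simp [A, heig, add_smul]
  have hcoeff (k : ι) : (ν k + η) * e.repr x k = ν k ^ β * e.repr g k := by
    rw [← e.repr_apply_of_apply_eq_smul hAeig, hAx, hr₀, e.repr_apply_of_apply_eq_smul hCβ]
  have hbound (k : ι) : ‖e.repr (η • x) k‖ ≤ ‖e.repr (η ^ β • g) k‖ := by
    have hpos : 0 < ν k + η := by linarith [hν k]
    have hx_k : e.repr x k = ν k ^ β * e.repr g k / (ν k + η) := by
      rw [eq_div_iff hpos.ne', mul_comm, hcoeff]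
    simp only [map_smul, lp.coeFn_smul, Pi.smul_apply, smul_eq_mul, hx_k, norm_mul,
      Real.norm_of_nonneg hη.le, Real.norm_of_nonneg (Real.rpow_nonneg hη.le β)]
    rw [norm_div, norm_mul, Real.norm_of_nonneg (Real.rpow_nonneg (hν k) β),
      Real.norm_of_nonneg hpos.le, mul_div_right_comm, ← mul_assoc, ← mul_div_assoc]
    gcongr
    exact Real.mul_rpow_div_add_le_rpow (hν k) hη hβ.1.le (hβ.2.trans (by norm_num))
  rw [hresidual, norm_neg]
  calc ‖η • x‖ ≤ ‖η ^ β • g‖ := e.norm_le_norm_of_forall_norm_repr_le hbound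
    _ = η ^ β * ‖g‖ := by rw [norm_smul, Real.norm_of_nonneg (Real.rpow_nonneg hη.le β)]

/-- Let `H` be a separable real Hilbert space, `C` a compact, positive,
self-adjoint bounded operator on `H` with orthonormal eigensystem `(ν k, e k)` (where `e` is a
Hilbert basis of `H`), let `β ∈ (0, 1/2]`, `g ∈ H`, and let `r₀ = C^β g`, where `C^β` is the
operator `Cβ` with the same eigenvectors and eigenvalues `ν k ^ β`.  Then for every `η > 0`,
`‖(C + ηI)⁻¹ C r₀ − r₀‖ ≤ η^β ‖g‖`. -/
theorem stmt0
    {H : Type*} [NormedAddCommGroup H] [InnerProductSpace ℝ H] [CompleteSpace H]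
    [TopologicalSpace.SeparableSpace H]
    (C : H →L[ℝ] H) (hC_compact : IsCompactOperator C) (hC_pos : C.IsPositive)
    {ι : Type*} (e : HilbertBasis ι ℝ H) (ν : ι → ℝ) (hν : ∀ k, 0 ≤ ν k)
    (heig : ∀ k, C (e k) = ν k • e k)
    (β : ℝ) (hβ : β ∈ Set.Ioc (0 : ℝ) (1 / 2))
    (Cβ : H →L[ℝ] H) (hCβ : ∀ k, Cβ (e k) = (ν k ^ β) • e k)
    (g r₀ : H) (hr₀ : r₀ = Cβ g)
    (η : ℝ) (hη : 0 < η) :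
    ‖Ring.inverse (C + η • (1 : H →L[ℝ] H)) (C r₀) - r₀‖ ≤ η ^ β * ‖g‖ :=
  stmt0_general C hC_pos e ν hν heig β hβ Cβ hCβ g r₀ hr₀ η hη
end

section
/- Let H_X and H_Z be separable Hilbert spaces over ℝ. Let C be a compact, positive, self-adjoint bounded linear operator on H_X; let β₂ ∈ (0, 1/2], ζ₂ < ∞, and let Γ : H_Z → H_X be a bounded linear operator with ‖Γ‖ ≤ ζ₂; set E = C^{β₂} ∘ Γ and B = C ∘ E. Let Ĉ be a positive, self-adjoint bounded linear operator on H_X and B̂ : H_Z → H_X a bounded linear operator, and suppose ‖Ĉ − C‖ ≤ ε₁ and ‖B̂ − B‖ ≤ ε₂. Then for every λ > 0, the estimator Ê_λ = (Ĉ + λI)⁻¹ ∘ B̂ satisfies ‖Ê_λ − E‖ ≤ (1/λ)(ε₁‖E‖ + ε₂) + λ^{β₂} ζ₂, where all norms on operators are operator norms. -/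
/-!
Put `A = C + λI` and `Â = Ĉ + λI`. The resolvent identity `Â⁻¹ - A⁻¹ = Â⁻¹ (C - Ĉ) A⁻¹` and
`A⁻¹ C + λ A⁻¹ = I` split the error as
`Â⁻¹ B̂ - E = Â⁻¹ (B̂ - B) + Â⁻¹ (C - Ĉ) (A⁻¹ C) E - (λ A⁻¹ C^β) Γ`.
Positivity of `Ĉ` gives `‖Â⁻¹‖ ≤ 1/λ`, while `A⁻¹ C` and `λ A⁻¹ C^β` are diagonal in the eigenbasis
of `C`, with eigenvalues `ν/(ν + λ) ≤ 1` and `λ ν^β/(ν + λ) ≤ λ^β` (weighted AM-GM).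
-/

open ContinuousLinearMap

theorem Real.mul_rpow_le_rpow_mul_add {x l β : ℝ} (hx : 0 ≤ x) (hl : 0 ≤ l) (hβ0 : 0 ≤ β)
    (hβ1 : β ≤ 1) : l * x ^ β ≤ l ^ β * (x + l) := by
  have hl_split : l ^ (1 - β) * l ^ β = l := by
    rw [← Real.rpow_add' hl (by norm_num), sub_add_cancel, Real.rpow_one]
  calc l * x ^ β = x ^ β * l ^ (1 - β) * l ^ β := by rw [mul_assoc, hl_split, mul_comm]
    _ ≤ (β * x + (1 - β) * l) * l ^ β := by
      gcongr
      exact Real.geom_mean_le_arith_mean2_weighted hβ0 (by linarith) hx hl (by ring)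
    _ ≤ (x + l) * l ^ β := by gcongr <;> nlinarith
    _ = l ^ β * (x + l) := mul_comm _ _

namespace HilbertBasis

variable {𝕜 H ι : Type*} [RCLike 𝕜] [NormedAddCommGroup H] [InnerProductSpace 𝕜 H]
  (e : HilbertBasis ι 𝕜 H) {T : H →L[𝕜] H} {μ : ι → 𝕜}

theorem repr_apply_eq_mul_of_apply_eq_smul (hT : ∀ k, T (e k) = μ k • e k) (x : H) (i : ι) :
    e.repr (T x) i = μ i * e.repr x i := by
  have hdense : Dense (Submodule.span 𝕜 (Set.range e) : Set H) :=
    Submodule.dense_iff_topologicalClosure_eq_top.mpr e.dense_span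
  have key : (innerSL 𝕜 (e i)).comp T = μ i • innerSL 𝕜 (e i) := by
    refine ext_on hdense ?_
    rintro _ ⟨k, rfl⟩
    rcases eq_or_ne i k with rfl | hik
    · simp [hT]
    · simp [hT, e.orthonormal.inner_eq_zero hik]
  simpa [e.repr_apply_apply] using congr($key x)

theorem opNorm_le_of_apply_eq_smul (hT : ∀ k, T (e k) = μ k • e k) {M : ℝ} (hM : 0 ≤ M)
    (hμ : ∀ k, ‖μ k‖ ≤ M) : ‖T‖ ≤ M := by
  refine T.opNorm_le_bound hM fun x => ?_
  calc ‖T x‖ = ‖e.repr (T x)‖ := (e.repr.norm_map _).symm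
    _ ≤ ‖(M : 𝕜) • e.repr x‖ := by
      refine lp.norm_mono two_ne_zero fun i => ?_
      rw [e.repr_apply_eq_mul_of_apply_eq_smul hT, lp.coeFn_smul, Pi.smul_apply, norm_mul,
        norm_smul, RCLike.norm_ofReal, abs_of_nonneg hM]
      gcongr
      exact hμ i
    _ = M * ‖x‖ := by
      rw [lp.norm_const_smul two_ne_zero, RCLike.norm_ofReal, abs_of_nonneg hM, e.repr.norm_map]

end HilbertBasis

namespace ContinuousLinearMap

section Algebra

variable {𝕜 M F : Type*} [NormedField 𝕜] [NormedAddCommGroup M] [NormedSpace 𝕜 M]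
  [NormedAddCommGroup F] [NormedSpace 𝕜 F]

theorem inverse_apply_of_apply_eq_smul {A : M →L[𝕜] M} (hA : IsUnit A) {x : M} {c : 𝕜}
    (hx : A x = c • x) (hc : c ≠ 0) : Ring.inverse A x = c⁻¹ • x := by
  have hx' : Ring.inverse A (A x) = x := by
    rw [← mul_apply_eq_comp, Ring.inverse_mul_cancel _ hA, one_apply_eq_self]
  rw [hx, map_smul] at hx'
  rw [eq_inv_smul_iff₀ hc, hx']

theorem inverse_comp_comp_sub_eq {C Ĉ : M →L[𝕜] M} {l : 𝕜} (hA : IsUnit (C + l • 1))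
    (hÂ : IsUnit (Ĉ + l • 1)) (E : F →L[𝕜] M) :
    Ring.inverse (Ĉ + l • 1) ∘L (C ∘L E) - E =
      Ring.inverse (Ĉ + l • 1) ∘L (C - Ĉ) ∘L (Ring.inverse (C + l • 1) ∘L C) ∘L E -
        l • (Ring.inverse (C + l • 1) ∘L E) := by
  set D := Ring.inverse (C + l • 1)
  set R := Ring.inverse (Ĉ + l • 1)
  have hRD : R - D = R * (C - Ĉ) * D := by
    rw [Ring.inverse_sub_inverse (iff_of_true hÂ hA)]
    congr 2
    abel
  have hDC : D * C = 1 - l • D := by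
    rw [eq_sub_iff_add_eq, ← Ring.inverse_mul_cancel _ hA, mul_add, mul_smul_comm, mul_one]
  have hring : R * C - 1 = R * (C - Ĉ) * (D * C) - l • D := by
    rw [← mul_assoc, ← hRD, sub_mul, hDC]
    abel
  simpa only [sub_comp, smul_comp, one_def, id_comp, mul_def, comp_assoc] using
    congr($hring ∘L E)

end Algebra

section Positive

open RealInnerProductSpace

variable {H : Type*} [NormedAddCommGroup H] [InnerProductSpace ℝ H] {T : H →L[ℝ] H} {l : ℝ}

theorem IsPositive.norm_sq_mul_le_norm_inner_add_smul_one (hT : T.IsPositive) (hl : 0 ≤ l)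
    (x : H) : ‖x‖ ^ 2 * l.toNNReal ≤ ‖⟪(T + l • (1 : H →L[ℝ] H)) x, x⟫‖ := by
  have hx : ⟪(T + l • (1 : H →L[ℝ] H)) x, x⟫ = ⟪T x, x⟫ + l * ‖x‖ ^ 2 := by
    simp [inner_add_left, real_inner_smul_left]
  rw [Real.coe_toNNReal _ hl, hx, Real.norm_eq_abs]
  nlinarith [hT.inner_nonneg_left x, le_abs_self (⟪T x, x⟫ + l * ‖x‖ ^ 2)]

theorem IsPositive.isUnit_add_smul_one_s4 [CompleteSpace H] (hT : T.IsPositive) (hl : 0 < l) :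
    IsUnit (T + l • (1 : H →L[ℝ] H)) :=
  isUnit_of_forall_le_norm_inner_map _ (Real.toNNReal_pos.mpr hl)
    (hT.norm_sq_mul_le_norm_inner_add_smul_one hl.le)

theorem IsPositive.norm_inverse_add_smul_one_le [CompleteSpace H] (hT : T.IsPositive)
    (hl : 0 < l) : ‖Ring.inverse (T + l • (1 : H →L[ℝ] H))‖ ≤ l⁻¹ := by
  set A := T + l • (1 : H →L[ℝ] H)
  have hA : AntilipschitzWith l.toNNReal⁻¹ A :=
    antilipschitz_of_forall_le_inner_map _ (Real.toNNReal_pos.mpr hl)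
      (hT.norm_sq_mul_le_norm_inner_add_smul_one hl.le)
  refine opNorm_le_bound _ (inv_nonneg.mpr hl.le) fun y => ?_
  have hy : A (Ring.inverse A y) = y := by
    rw [← mul_apply_eq_comp, Ring.mul_inverse_cancel _ (hT.isUnit_add_smul_one_s4 hl),
      one_apply_eq_self]
  simpa [hy, Real.coe_toNNReal _ hl.le] using hA.le_mul_norm (map_zero A) (Ring.inverse A y)

end Positive

end ContinuousLinearMap

theorem stmt4_general
    {HX : Type*} [NormedAddCommGroup HX] [InnerProductSpace ℝ HX] [CompleteSpace HX]
    {HZ : Type*} [NormedAddCommGroup HZ] [InnerProductSpace ℝ HZ]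
    (C : HX →L[ℝ] HX) (hC_pos : C.IsPositive)
    {ι : Type*} (e : HilbertBasis ι ℝ HX) (ν : ι → ℝ) (hν : ∀ k, 0 ≤ ν k)
    (heig : ∀ k, C (e k) = ν k • e k)
    (β₂ : ℝ) (hβ : β₂ ∈ Set.Ioc (0 : ℝ) (1 / 2)) (ζ₂ : ℝ)
    (Γ : HZ →L[ℝ] HX) (hΓ : ‖Γ‖ ≤ ζ₂)
    (Cβ : HX →L[ℝ] HX) (hCβ : ∀ k, Cβ (e k) = (ν k ^ β₂) • e k)
    (E : HZ →L[ℝ] HX) (hE : E = Cβ ∘L Γ)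
    (B : HZ →L[ℝ] HX) (hB : B = C ∘L E)
    (Chat : HX →L[ℝ] HX) (hChat_pos : Chat.IsPositive)
    (Bhat : HZ →L[ℝ] HX)
    (ε₁ ε₂ : ℝ) (hε₁ : ‖Chat - C‖ ≤ ε₁) (hε₂ : ‖Bhat - B‖ ≤ ε₂)
    (l : ℝ) (hl : 0 < l) :
    ‖Ring.inverse (Chat + l • (1 : HX →L[ℝ] HX)) ∘L Bhat - E‖ ≤
      (1 / l) * (ε₁ * ‖E‖ + ε₂) + l ^ β₂ * ζ₂ := by
  set D := Ring.inverse (C + l • (1 : HX →L[ℝ] HX))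
  set R := Ring.inverse (Chat + l • (1 : HX →L[ℝ] HX))
  have hA := hC_pos.isUnit_add_smul_one_s4 hl
  have hνl : ∀ k, 0 < ν k + l := fun k => by linarith [hν k]
  have hDe : ∀ k, D (e k) = (ν k + l)⁻¹ • e k := fun k =>
    inverse_apply_of_apply_eq_smul hA (by simp [heig, add_smul]) (hνl k).ne'
  have hDC : ‖D ∘L C‖ ≤ 1 := by
    refine e.opNorm_le_of_apply_eq_smul (μ := fun k => ν k * (ν k + l)⁻¹)
      (fun k => by simp [heig, hDe, smul_smul]) zero_le_one fun k => ?_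
    rw [← div_eq_mul_inv, Real.norm_of_nonneg (div_nonneg (hν k) (hνl k).le),
      div_le_one (hνl k)]
    linarith
  have hDCβ : ‖l • (D ∘L Cβ)‖ ≤ l ^ β₂ := by
    refine e.opNorm_le_of_apply_eq_smul (μ := fun k => l * (ν k ^ β₂ * (ν k + l)⁻¹))
      (fun k => by simp [hCβ, hDe, smul_smul]) (by positivity) fun k => ?_
    rw [← div_eq_mul_inv, ← mul_div_assoc,
      Real.norm_of_nonneg (by have := hν k; have := hνl k; positivity), div_le_iff₀ (hνl k)]
    exact Real.mul_rpow_le_rpow_mul_add (hν k) hl.le hβ.1.le (hβ.2.trans (by norm_num))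
  have hÂ := hChat_pos.isUnit_add_smul_one_s4 hl
  have hR := hChat_pos.norm_inverse_add_smul_one_le hl
  have hlDE : ‖l • (D ∘L E)‖ ≤ l ^ β₂ * ζ₂ := by
    rw [hE, ← comp_assoc, ← smul_comp]
    exact (opNorm_comp_le _ _).trans (by gcongr)
  have hε₁' : ‖C - Chat‖ ≤ ε₁ := norm_sub_rev C Chat ▸ hε₁
  have hsplit : R ∘L (C ∘L E) - E = R ∘L (C - Chat) ∘L (D ∘L C) ∘L E - l • (D ∘L E) :=
    inverse_comp_comp_sub_eq hA hÂ E
  calc ‖R ∘L Bhat - E‖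
      = ‖R ∘L (Bhat - B) + (R ∘L (C - Chat) ∘L (D ∘L C) ∘L E - l • (D ∘L E))‖ := by
        rw [← hsplit, hB, comp_sub, sub_add_sub_cancel]
    _ ≤ ‖R‖ * ‖Bhat - B‖ + (‖R‖ * (‖C - Chat‖ * (‖D ∘L C‖ * ‖E‖)) + ‖l • (D ∘L E)‖) := by
        grw [norm_add_le, norm_sub_le, opNorm_comp_le, opNorm_comp_le, opNorm_comp_le,
          opNorm_comp_le]
    _ ≤ l⁻¹ * ε₂ + (l⁻¹ * (ε₁ * (1 * ‖E‖)) + l ^ β₂ * ζ₂) := by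
        gcongr
        exact (norm_nonneg _).trans hε₁
    _ = (1 / l) * (ε₁ * ‖E‖ + ε₂) + l ^ β₂ * ζ₂ := by ring

/-- Let `H_X`, `H_Z` be separable real Hilbert spaces.  Let `C` be a compact,
positive, self-adjoint bounded operator on `H_X` with orthonormal eigensystem `(ν k, e k)`
(`e` a Hilbert basis); let `β₂ ∈ (0, 1/2]`, `ζ₂ < ∞`, and `Γ : H_Z →L H_X` with `‖Γ‖ ≤ ζ₂`;
set `E = C^{β₂} ∘ Γ` (with `C^{β₂} = Cβ` the operator with eigenvalues `ν k ^ β₂`) and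
`B = C ∘ E`.  Let `Ĉ` be a positive self-adjoint bounded operator on `H_X`, `B̂ : H_Z →L H_X`,
with `‖Ĉ − C‖ ≤ ε₁` and `‖B̂ − B‖ ≤ ε₂`.  Then for every `λ > 0` the estimator
`Ê_λ = (Ĉ + λI)⁻¹ ∘ B̂` satisfies `‖Ê_λ − E‖ ≤ (1/λ)(ε₁‖E‖ + ε₂) + λ^{β₂} ζ₂`
(operator norms throughout). -/
theorem stmt4
    {HX : Type*} [NormedAddCommGroup HX] [InnerProductSpace ℝ HX] [CompleteSpace HX]
    [TopologicalSpace.SeparableSpace HX]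
    {HZ : Type*} [NormedAddCommGroup HZ] [InnerProductSpace ℝ HZ] [CompleteSpace HZ]
    [TopologicalSpace.SeparableSpace HZ]
    (C : HX →L[ℝ] HX) (hC_compact : IsCompactOperator C) (hC_pos : C.IsPositive)
    {ι : Type*} (e : HilbertBasis ι ℝ HX) (ν : ι → ℝ) (hν : ∀ k, 0 ≤ ν k)
    (heig : ∀ k, C (e k) = ν k • e k)
    (β₂ : ℝ) (hβ : β₂ ∈ Set.Ioc (0 : ℝ) (1 / 2)) (ζ₂ : ℝ)
    (Γ : HZ →L[ℝ] HX) (hΓ : ‖Γ‖ ≤ ζ₂)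
    (Cβ : HX →L[ℝ] HX) (hCβ : ∀ k, Cβ (e k) = (ν k ^ β₂) • e k)
    (E : HZ →L[ℝ] HX) (hE : E = Cβ ∘L Γ)
    (B : HZ →L[ℝ] HX) (hB : B = C ∘L E)
    (Chat : HX →L[ℝ] HX) (hChat_pos : Chat.IsPositive)
    (Bhat : HZ →L[ℝ] HX)
    (ε₁ ε₂ : ℝ) (hε₁ : ‖Chat - C‖ ≤ ε₁) (hε₂ : ‖Bhat - B‖ ≤ ε₂)
    (l : ℝ) (hl : 0 < l) :
    ‖Ring.inverse (Chat + l • (1 : HX →L[ℝ] HX)) ∘L Bhat - E‖ ≤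
      (1 / l) * (ε₁ * ‖E‖ + ε₂) + l ^ β₂ * ζ₂ :=
  stmt4_general C hC_pos e ν hν heig β₂ hβ ζ₂ Γ hΓ Cβ hCβ E hE B hB Chat hChat_pos Bhat ε₁ ε₂ hε₁
    hε₂ l hl
end

section
/- Let n, d, m ∈ ℕ, let Ψ ∈ ℝ^{d×n} and Φ ∈ ℝ^{m×n} be matrices, let D ∈ ℝ^{n×n} be a diagonal matrix with nonnegative diagonal entries, and let λ > 0. Then the minimum over E ∈ ℝ^{d×m} of L(E) = tr((Φ − EᵀΨ) D (Φ − EᵀΨ)ᵀ) + λ ‖E‖_F² equals tr(G (D − D Ψᵀ (Ψ D Ψᵀ + λ I)⁻¹ Ψ D)), where G = Φᵀ Φ ∈ ℝ^{n×n}. Equivalently, L(Ê) = tr(G(D − DΨᵀ(ΨDΨᵀ + λI)⁻¹ΨD)) for Ê = (ΨDΨᵀ + λI)⁻¹ΨDΦᵀ. -/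
open Matrix

attribute [local instance] Matrix.frobeniusNormedAddCommGroup

/-
Expanding the trace and writing `A = ΨDΨᵀ + λI`, `B = ΨDΦᵀ`, the objective is the quadratic
`L(E) = tr(ΦDΦᵀ) - 2 tr(EᵀB) + tr(EᵀAE)`. Since `A` is symmetric and `AÊ = B`, completing the
square gives `L(E) = L(Ê) + tr((E - Ê)ᵀ A (E - Ê))`, and the last term is nonnegative because
`A` is positive definite. The value `L(Ê) = tr(ΦDΦᵀ) - tr(BᵀA⁻¹B)` is rearranged by cyclicity
of the trace.
-/

namespace Matrix

variable {m n p : Type*} [Fintype m] [Fintype n] [Fintype p]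

theorem frobenius_norm_sq_eq_trace_transpose_mul (E : Matrix m n ℝ) :
    ‖E‖ ^ 2 = (Eᵀ * E).trace := by
  have h0 : (0 : ℝ) ≤ ∑ i, ∑ j, ‖E i j‖ ^ (2 : ℝ) := by positivity
  rw [frobenius_norm_def, ← Real.rpow_natCast, ← Real.rpow_mul h0]
  norm_num [trace, mul_apply, Finset.sum_comm (γ := m), sq]

theorem trace_transpose_mul_mul_nonneg {A : Matrix n n ℝ} (hA : A.PosSemidef)
    (X : Matrix n m ℝ) : 0 ≤ (Xᵀ * A * X).trace := by
  simpa [conjTranspose_eq_transpose_of_trivial] using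
    (hA.conjTranspose_mul_mul_same X).trace_nonneg

section CommRing

variable {R : Type*} [CommRing R]

theorem trace_quadratic_eq_of_mul_eq {A : Matrix n n R} (hA : Aᵀ = A) {E₀ B : Matrix n m R}
    (hE₀ : A * E₀ = B) (E : Matrix n m R) :
    (Eᵀ * A * E).trace - 2 * (Eᵀ * B).trace
      = ((E - E₀)ᵀ * A * (E - E₀)).trace - (E₀ᵀ * B).trace := by
  have hsymm : (E₀ᵀ * A * E).trace = (Eᵀ * B).trace := by
    rw [← trace_transpose, ← hE₀]
    simp only [transpose_mul, transpose_transpose, hA, Matrix.mul_assoc]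
  simp only [transpose_sub, Matrix.sub_mul, Matrix.mul_sub, trace_sub, Matrix.mul_assoc, hE₀]
    at hsymm ⊢
  linear_combination hsymm

theorem trace_weighted_residual_add_smul_eq [DecidableEq p] {D : Matrix n n R} (hD : Dᵀ = D)
    (Φ : Matrix m n R) (Ψ : Matrix p n R) (l : R) (E : Matrix p m R) :
    ((Φ - Eᵀ * Ψ) * D * (Φ - Eᵀ * Ψ)ᵀ).trace + l * (Eᵀ * E).trace
      = (Φ * D * Φᵀ).trace - 2 * (Eᵀ * (Ψ * D * Φᵀ)).trace
        + (Eᵀ * (Ψ * D * Ψᵀ + l • 1) * E).trace := by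
  have hcross : (Φ * D * (Eᵀ * Ψ)ᵀ).trace = (Eᵀ * (Ψ * D * Φᵀ)).trace := by
    rw [← trace_transpose]
    simp only [transpose_mul, transpose_transpose, hD, Matrix.mul_assoc]
  simp only [transpose_sub, Matrix.sub_mul, Matrix.mul_sub, Matrix.mul_add, Matrix.add_mul,
    trace_sub, trace_add, Matrix.mul_smul, Matrix.smul_mul, Matrix.mul_one, trace_smul,
    smul_eq_mul] at hcross ⊢
  simp only [transpose_mul, transpose_transpose, Matrix.mul_assoc, trace_mul_comm Φ] at hcross ⊢
  linear_combination (-1 : R) * hcross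

theorem trace_weighted_residual_add_smul_eq_of_mul_eq [DecidableEq p] {D : Matrix n n R}
    (hD : Dᵀ = D) (Φ : Matrix m n R) (Ψ : Matrix p n R) (l : R) {E₀ : Matrix p m R}
    (hE₀ : (Ψ * D * Ψᵀ + l • 1) * E₀ = Ψ * D * Φᵀ) (E : Matrix p m R) :
    ((Φ - Eᵀ * Ψ) * D * (Φ - Eᵀ * Ψ)ᵀ).trace + l * (Eᵀ * E).trace
      = (Φ * D * Φᵀ).trace - (E₀ᵀ * (Ψ * D * Φᵀ)).trace
        + ((E - E₀)ᵀ * (Ψ * D * Ψᵀ + l • 1) * (E - E₀)).trace := by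
  have hsymm : (Ψ * D * Ψᵀ + l • (1 : Matrix p p R))ᵀ = Ψ * D * Ψᵀ + l • 1 := by
    simp only [transpose_add, transpose_mul, transpose_transpose, hD, transpose_smul,
      transpose_one, Matrix.mul_assoc]
  rw [trace_weighted_residual_add_smul_eq hD]
  linear_combination trace_quadratic_eq_of_mul_eq hsymm hE₀ E

theorem trace_sub_trace_transpose_mul_eq {D : Matrix n n R} (hD : Dᵀ = D)
    (Φ : Matrix m n R) (Ψ : Matrix p n R) (M : Matrix p p R) :
    (Φ * D * Φᵀ).trace - ((M * Ψ * D * Φᵀ)ᵀ * (Ψ * D * Φᵀ)).trace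
      = (Φᵀ * Φ * (D - D * Ψᵀ * M * Ψ * D)).trace := by
  rw [← trace_transpose (_ᵀ * _), Matrix.mul_assoc Φᵀ, trace_mul_comm Φᵀ]
  simp only [transpose_mul, transpose_transpose, hD, Matrix.mul_sub, Matrix.sub_mul, trace_sub,
    Matrix.mul_assoc]

end CommRing

end Matrix

/-- Let `Ψ ∈ ℝ^{d×n}`, `Φ ∈ ℝ^{m×n}`, `D ∈ ℝ^{n×n}` diagonal with
nonnegative diagonal entries, and `λ > 0`.  Then the minimum over `E ∈ ℝ^{d×m}` of
`L(E) = tr((Φ − EᵀΨ) D (Φ − EᵀΨ)ᵀ) + λ ‖E‖_F²` equals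
`tr(G (D − D Ψᵀ (Ψ D Ψᵀ + λ I)⁻¹ Ψ D))` where `G = ΦᵀΦ`; equivalently, this value is
`L(Ê)` for `Ê = (Ψ D Ψᵀ + λI)⁻¹ Ψ D Φᵀ`, which minimizes `L`.
(`‖·‖` is the Frobenius norm, enabled by the local instance above.) -/
theorem stmt14
    (n d m : ℕ)
    (Ψ : Matrix (Fin d) (Fin n) ℝ) (Φ : Matrix (Fin m) (Fin n) ℝ)
    (w : Fin n → ℝ) (hw : ∀ i, 0 ≤ w i)
    (D : Matrix (Fin n) (Fin n) ℝ) (hD : D = Matrix.diagonal w)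
    (l : ℝ) (hl : 0 < l)
    (L : Matrix (Fin d) (Fin m) ℝ → ℝ)
    (hL : ∀ E, L E = ((Φ - Eᵀ * Ψ) * D * (Φ - Eᵀ * Ψ)ᵀ).trace + l * ‖E‖ ^ 2)
    (G : Matrix (Fin n) (Fin n) ℝ) (hG : G = Φᵀ * Φ)
    (Ehat : Matrix (Fin d) (Fin m) ℝ)
    (hEhat : Ehat = (Ψ * D * Ψᵀ + l • (1 : Matrix (Fin d) (Fin d) ℝ))⁻¹ * Ψ * D * Φᵀ) :
    L Ehat = (G * (D - D * Ψᵀ *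
        (Ψ * D * Ψᵀ + l • (1 : Matrix (Fin d) (Fin d) ℝ))⁻¹ * Ψ * D)).trace ∧
      ∀ E, L Ehat ≤ L E := by
  set A := Ψ * D * Ψᵀ + l • (1 : Matrix (Fin d) (Fin d) ℝ)
  have hDsymm : Dᵀ = D := hD ▸ diagonal_transpose w
  have hApos : A.PosDef := by
    have hDpos : D.PosSemidef := hD ▸ posSemidef_diagonal_iff.mpr hw
    have hΨDΨ : (Ψ * D * Ψᵀ).PosSemidef := by
      simpa only [conjTranspose_eq_transpose_of_trivial] using hDpos.mul_mul_conjTranspose_same Ψ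
    exact PosDef.posSemidef_add hΨDΨ (PosDef.one.smul hl)
  have hAEhat : A * Ehat = Ψ * D * Φᵀ := by
    simp only [hEhat, Matrix.mul_assoc]
    exact mul_nonsing_inv_cancel_left A _ hApos.det_pos.ne'.isUnit
  have hLE : ∀ E, L E = (Φ * D * Φᵀ).trace - (Ehatᵀ * (Ψ * D * Φᵀ)).trace
      + ((E - Ehat)ᵀ * A * (E - Ehat)).trace := fun E => by
    rw [hL, frobenius_norm_sq_eq_trace_transpose_mul,
      trace_weighted_residual_add_smul_eq_of_mul_eq hDsymm Φ Ψ l hAEhat]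
  have hLEhat : L Ehat = (Φ * D * Φᵀ).trace - (Ehatᵀ * (Ψ * D * Φᵀ)).trace := by
    simpa using hLE Ehat
  refine ⟨?_, fun E => ?_⟩
  · rw [hLEhat, hG, hEhat, trace_sub_trace_transpose_mul_eq hDsymm]
  · rw [hLEhat, hLE E]
    linarith [trace_transpose_mul_mul_nonneg hApos.posSemidef (E - Ehat)]
end
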